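/- The Wilson polynomials R_n(x) defined by the explicit ₄F₃ formula satisfy the second-order difference equation n(n+a+b+c+d−1)R_n(x) = A(−x)[R_n(x+i) − R_n(x)] + A(x)[R_n(x−i) − R_n(x)], where A(x) = (a+ix)(b+ix)(c+ix)(d+ix)/(2ix(2ix+1)). -/

import Mathlib

/-!
On the basis `φ_k(x) = (a + ix)_k (a - ix)_k` the difference operator `L` of the right-hand side
is lower bidiagonal with diagonal entries `k (k + s - 1)`, where `s = a + b + c + d`. The ₄F₃
coefficients `C_k` of `R_n` satisfy a two-term recurrence which, after an index shift, turns the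
subdiagonal contribution into `-(k - n) (k + n + s - 1) C_k φ_k`. Since
`k (k + s - 1) - (k - n) (k + n + s - 1) = n (n + s - 1)` does not depend on `k`,
`L R_n = n (n + s - 1) R_n`.
-/

open Complex

/-- The Pochhammer symbol (z)_k in ℂ. -/
noncomputable def pch (z : ℂ) (k : ℕ) : ℂ := ∏ j ∈ Finset.range k, (z + j)

noncomputable def Afun (a b c d x : ℂ) : ℂ :=
  (a + I * x) * (b + I * x) * (c + I * x) * (d + I * x) / (2 * I * x * (2 * I * x + 1))

/-- The Wilson polynomial R_n(x;a,b,c,d) as a finite ₄F₃ sum. -/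
noncomputable def wilsonR (a b c d : ℂ) (n : ℕ) (x : ℂ) : ℂ :=
  ∑ k ∈ Finset.range (n + 1),
    pch (-(n : ℂ)) k * pch ((n : ℂ) + a + b + c + d - 1) k *
      pch (a + I * x) k * pch (a - I * x) k /
      (pch (a + b) k * pch (a + c) k * pch (a + d) k * (k.factorial : ℂ))

lemma pch_succ_right (z : ℂ) (k : ℕ) : pch z (k + 1) = pch z k * (z + k) :=
  Finset.prod_range_succ _ k

lemma pch_succ_left (z : ℂ) (k : ℕ) : pch z (k + 1) = z * pch (z + 1) k := by
  simp only [pch, Finset.prod_range_succ', Nat.cast_succ, Nat.cast_zero, add_zero]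
  rw [mul_comm]
  exact congrArg (z * ·) (Finset.prod_congr rfl fun j _ => by ring)

lemma pch_ne_zero {z : ℂ} (hz : ∀ m : ℕ, z ≠ -(m : ℂ)) (k : ℕ) : pch z k ≠ 0 :=
  Finset.prod_ne_zero_iff.mpr fun j _ hj => hz j (eq_neg_of_add_eq_zero_left hj)

lemma Finset.sum_range_succ_eq_of_shift {M : Type*} [AddCommMonoid M] {f g : ℕ → M} {n : ℕ}
    (hf : f 0 = 0) (hg : g n = 0) (hfg : ∀ k < n, f (k + 1) = g k) :
    ∑ k ∈ range (n + 1), f k = ∑ k ∈ range (n + 1), g k := by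
  rw [sum_range_succ', sum_range_succ, hf, hg]
  exact congrArg (· + 0) (sum_congr rfl fun k hk => hfg k (mem_range.mp hk))

noncomputable def wilsonBasis (a : ℂ) (k : ℕ) (x : ℂ) : ℂ :=
  pch (a + I * x) k * pch (a - I * x) k

noncomputable def wilsonCoeff (a b c d : ℂ) (n k : ℕ) : ℂ :=
  pch (-(n : ℂ)) k * pch ((n : ℂ) + a + b + c + d - 1) k /
    (pch (a + b) k * pch (a + c) k * pch (a + d) k * (k.factorial : ℂ))

lemma wilsonR_eq_sum (a b c d : ℂ) (n : ℕ) (x : ℂ) :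
    wilsonR a b c d n x =
      ∑ k ∈ Finset.range (n + 1), wilsonCoeff a b c d n k * wilsonBasis a k x :=
  Finset.sum_congr rfl fun k _ => by rw [wilsonCoeff, wilsonBasis]; ring

noncomputable def wilsonOp (a b c d : ℂ) (f : ℂ → ℂ) (x : ℂ) : ℂ :=
  Afun a b c d (-x) * (f (x + I) - f x) + Afun a b c d x * (f (x - I) - f x)

lemma wilsonOp_sum (a b c d : ℂ) {ι : Type*} (s : Finset ι) (g : ι → ℂ) (φ : ι → ℂ → ℂ)
    (x : ℂ) :
    wilsonOp a b c d (fun y => ∑ i ∈ s, g i * φ i y) x =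
      ∑ i ∈ s, g i * wilsonOp a b c d (φ i) x := by
  simp only [wilsonOp, ← Finset.sum_sub_distrib, Finset.mul_sum, ← Finset.sum_add_distrib]
  exact Finset.sum_congr rfl fun i _ => by ring

lemma Afun_neg (a b c d x : ℂ) :
    Afun a b c d (-x) =
      (a - I * x) * (b - I * x) * (c - I * x) * (d - I * x) / (2 * I * x * (2 * I * x - 1)) := by
  simp only [Afun, mul_neg, ← sub_eq_add_neg]
  congr 1
  ring

lemma wilsonBasis_succ_add_I_sub (a x : ℂ) (m : ℕ) :
    wilsonBasis a (m + 1) (x + I) - wilsonBasis a (m + 1) x =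
      (m + 1) * (2 * I * x - 1) * pch (a + I * x) m * pch (a - I * x + 1) m := by
  have hp : a + I * (x + I) = a + I * x - 1 := by rw [mul_add, I_mul_I]; ring
  have hm : a - I * (x + I) = a - I * x + 1 := by rw [mul_add, I_mul_I]; ring
  rw [wilsonBasis, wilsonBasis, hp, hm, pch_succ_left (a + I * x - 1), sub_add_cancel,
    pch_succ_right (a - I * x + 1), pch_succ_right (a + I * x), pch_succ_left (a - I * x)]
  ring

lemma wilsonBasis_succ_sub_I_sub (a x : ℂ) (m : ℕ) :
    wilsonBasis a (m + 1) (x - I) - wilsonBasis a (m + 1) x =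
      -(m + 1) * (2 * I * x + 1) * pch (a + I * x + 1) m * pch (a - I * x) m := by
  have hp : a + I * (x - I) = a + I * x + 1 := by rw [mul_sub, I_mul_I]; ring
  have hm : a - I * (x - I) = a - I * x - 1 := by rw [mul_sub, I_mul_I]; ring
  rw [wilsonBasis, wilsonBasis, hp, hm, pch_succ_left (a - I * x - 1), sub_add_cancel,
    pch_succ_right (a + I * x + 1), pch_succ_left (a + I * x), pch_succ_right (a - I * x)]
  ring

lemma wilsonOp_wilsonBasis (a b c d x : ℂ) (h0 : 2 * I * x ≠ 0) (h1 : 2 * I * x ≠ 1)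
    (h2 : 2 * I * x ≠ -1) (k : ℕ) :
    wilsonOp a b c d (wilsonBasis a k) x =
      k * (k + a + b + c + d - 1) * wilsonBasis a k x -
        k * (a + b + k - 1) * (a + c + k - 1) * (a + d + k - 1) * wilsonBasis a (k - 1) x := by
  rcases k with _ | m
  · simp [wilsonOp, wilsonBasis, pch]
  have h1' : 2 * I * x - 1 ≠ 0 := sub_ne_zero.mpr h1
  have h2' : 2 * I * x + 1 ≠ 0 := fun h => h2 (eq_neg_of_add_eq_zero_left h)
  -- `A(∓x)` cancels the factor `2ix ∓ 1` of the difference; the two remainders add up to an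
  -- odd function of `x`, which is why the final division by `2ix` is exact.
  have hfwd : Afun a b c d (-x) * (wilsonBasis a (m + 1) (x + I) - wilsonBasis a (m + 1) x) =
      (m + 1) * ((b - I * x) * (c - I * x) * (d - I * x)) * pch (a + I * x) m *
        pch (a - I * x) (m + 1) / (2 * I * x) := by
    rw [wilsonBasis_succ_add_I_sub, pch_succ_left (a - I * x), Afun_neg, div_mul_eq_mul_div,
      div_eq_div_iff (mul_ne_zero h0 h1') h0]
    ring
  have hbwd : Afun a b c d x * (wilsonBasis a (m + 1) (x - I) - wilsonBasis a (m + 1) x) =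
      -(m + 1) * ((b + I * x) * (c + I * x) * (d + I * x)) * pch (a + I * x) (m + 1) *
        pch (a - I * x) m / (2 * I * x) := by
    rw [wilsonBasis_succ_sub_I_sub, pch_succ_left (a + I * x), Afun, div_mul_eq_mul_div,
      div_eq_div_iff (mul_ne_zero h0 h2') h0]
    ring
  rw [wilsonOp, hfwd, hbwd, ← add_div, div_eq_iff h0, Nat.add_sub_cancel, wilsonBasis,
    wilsonBasis, pch_succ_right (a + I * x), pch_succ_right (a - I * x)]
  push_cast
  ring

lemma wilsonCoeff_succ_mul (a b c d : ℂ) (n : ℕ)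
    (hab : ∀ m : ℕ, a + b ≠ -(m : ℂ)) (hac : ∀ m : ℕ, a + c ≠ -(m : ℂ))
    (had : ∀ m : ℕ, a + d ≠ -(m : ℂ)) (k : ℕ) :
    wilsonCoeff a b c d n (k + 1) * ((k + 1) * (a + b + k) * (a + c + k) * (a + d + k)) =
      wilsonCoeff a b c d n k * ((k - n) * (n + a + b + c + d - 1 + k)) := by
  have hb : a + b + k ≠ 0 := fun h => hab k (eq_neg_of_add_eq_zero_left h)
  have hc : a + c + k ≠ 0 := fun h => hac k (eq_neg_of_add_eq_zero_left h)
  have hd : a + d + k ≠ 0 := fun h => had k (eq_neg_of_add_eq_zero_left h)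
  have hk : (k : ℂ) + 1 ≠ 0 := Nat.cast_add_one_ne_zero k
  have hpb := pch_ne_zero hab k
  have hpc := pch_ne_zero hac k
  have hpd := pch_ne_zero had k
  rw [wilsonCoeff, wilsonCoeff, pch_succ_right, pch_succ_right, pch_succ_right, pch_succ_right,
    pch_succ_right, Nat.factorial_succ]
  push_cast
  field_simp
  ring

lemma wilsonOp_wilsonR (a b c d x : ℂ) (n : ℕ)
    (h0 : 2 * I * x ≠ 0) (h1 : 2 * I * x ≠ 1) (h2 : 2 * I * x ≠ -1)
    (hab : ∀ m : ℕ, a + b ≠ -(m : ℂ)) (hac : ∀ m : ℕ, a + c ≠ -(m : ℂ))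
    (had : ∀ m : ℕ, a + d ≠ -(m : ℂ)) :
    wilsonOp a b c d (wilsonR a b c d n) x =
      n * (n + a + b + c + d - 1) * wilsonR a b c d n x := by
  rw [funext (wilsonR_eq_sum a b c d n), wilsonOp_sum]
  set C := wilsonCoeff a b c d n
  set φ := fun k => wilsonBasis a k x
  calc ∑ k ∈ Finset.range (n + 1), C k * wilsonOp a b c d (wilsonBasis a k) x
      = ∑ k ∈ Finset.range (n + 1), C k * (k * (k + a + b + c + d - 1)) * φ k -
          ∑ k ∈ Finset.range (n + 1),
            C k * (k * (a + b + k - 1) * (a + c + k - 1) * (a + d + k - 1)) * φ (k - 1) := by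
        rw [← Finset.sum_sub_distrib]
        exact Finset.sum_congr rfl fun k _ => by rw [wilsonOp_wilsonBasis a b c d x h0 h1 h2]; ring
    _ = ∑ k ∈ Finset.range (n + 1), C k * (k * (k + a + b + c + d - 1)) * φ k -
          ∑ k ∈ Finset.range (n + 1), C k * ((k - n) * (n + a + b + c + d - 1 + k)) * φ k := by
        congr 1
        refine Finset.sum_range_succ_eq_of_shift (by simp) (by simp) fun k _ => ?_
        push_cast
        linear_combination φ k * wilsonCoeff_succ_mul a b c d n hab hac had k
    _ = n * (n + a + b + c + d - 1) * ∑ k ∈ Finset.range (n + 1), C k * φ k := by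
        rw [← Finset.sum_sub_distrib, Finset.mul_sum]
        exact Finset.sum_congr rfl fun k _ => by ring

/-- The second order difference equation for the Wilson polynomials:
n(n+a+b+c+d−1)R_n(x) = A(−x)[R_n(x+i) − R_n(x)] + A(x)[R_n(x−i) − R_n(x)]. -/
theorem wilsonR_difference_equation (a b c d x : ℂ) (n : ℕ)
    (h0 : 2 * I * x ≠ 0) (h1 : 2 * I * x ≠ 1) (h2 : 2 * I * x ≠ -1)
    (hab : ∀ m : ℕ, a + b ≠ -(m : ℂ)) (hac : ∀ m : ℕ, a + c ≠ -(m : ℂ))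
    (had : ∀ m : ℕ, a + d ≠ -(m : ℂ)) :
    (n : ℂ) * ((n : ℂ) + a + b + c + d - 1) * wilsonR a b c d n x =
      Afun a b c d (-x) * (wilsonR a b c d n (x + I) - wilsonR a b c d n x) +
        Afun a b c d x * (wilsonR a b c d n (x - I) - wilsonR a b c d n x) :=
  (wilsonOp_wilsonR a b c d x n h0 h1 h2 hab hac had).symm
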